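/- arXiv:2107.03284 — 2 statements merged into one kernel-verified Lean document; each statement's English description precedes it below -/
import Mathlib

section
/- Let T > 0 and g : [0,T] → ℝ be a Lipschitz continuous function with g(t) ≥ 0 for all t ∈ [0,T]. If the integral ∫₀ᵀ 1/g(s) ds is finite, then g(t) > 0 for all t ∈ [0,T]. -/
/-! If `g t ≤ 0`, the Lipschitz bound gives `g s ≤ C |s - t|`, so `1/g` dominates `C⁻¹ / |s - t|`,
which is not integrable near `t`. -/

open MeasureTheory Set

theorem lintegral_inv_ofReal_abs_sub_eq_top {a b c : ℝ} (hab : a < b) (hc : c ∈ Icc a b) :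
    ∫⁻ s in Icc a b, (ENNReal.ofReal |s - c|)⁻¹ = ⊤ := by
  by_contra hfin
  have hint : IntegrableOn (fun s => (s - c)⁻¹) (Icc a b) := by
    refine ⟨(measurable_id.sub_const c).inv.aestronglyMeasurable,
      lt_of_le_of_lt (setLIntegral_mono' measurableSet_Icc fun s _ => ?_)
        (lt_top_iff_ne_top.2 hfin)⟩
    rcases eq_or_ne (s - c) 0 with hs | hs
    · simp [hs]
    · rw [enorm_inv hs, Real.enorm_eq_ofReal_abs]
  rw [← uIcc_of_le hab.le] at hint hc
  rcases intervalIntegrable_sub_inv_iff.1 hint.intervalIntegrable with h | h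
  · exact hab.ne h
  · exact h hc

theorem LipschitzOnWith.lintegral_inv_ofReal_eq_top {g : ℝ → ℝ} {C : NNReal} {a b t : ℝ}
    (hg : LipschitzOnWith C g (Icc a b)) (hab : a < b) (ht : t ∈ Icc a b) (hgt : g t ≤ 0) :
    ∫⁻ s in Icc a b, (ENNReal.ofReal (g s))⁻¹ = ⊤ := by
  have hbound : ∀ s ∈ Icc a b, ENNReal.ofReal (g s) ≤ C * ENNReal.ofReal |s - t| := fun s hs =>
    calc ENNReal.ofReal (g s) ≤ ENNReal.ofReal (C * |s - t|) := by
          have := hg.dist_le_mul s hs t ht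
          rw [Real.dist_eq, Real.dist_eq] at this
          exact ENNReal.ofReal_le_ofReal (by linarith [le_abs_self (g s - g t)])
      _ = C * ENNReal.ofReal |s - t| := by
          rw [ENNReal.ofReal_mul C.coe_nonneg, ENNReal.ofReal_coe_nnreal]
  refine top_le_iff.1 ?_
  calc ⊤ = (C : ENNReal)⁻¹ * ∫⁻ s in Icc a b, (ENNReal.ofReal |s - t|)⁻¹ := by
        rw [lintegral_inv_ofReal_abs_sub_eq_top hab ht, ENNReal.mul_top (by simp)]
    _ = ∫⁻ s in Icc a b, (C * ENNReal.ofReal |s - t|)⁻¹ := by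
        rw [← lintegral_const_mul _ (by fun_prop)]
        refine lintegral_congr fun s => ?_
        rw [ENNReal.mul_inv (by simp) (by simp)]
    _ ≤ ∫⁻ s in Icc a b, (ENNReal.ofReal (g s))⁻¹ :=
        setLIntegral_mono' measurableSet_Icc fun s hs => ENNReal.inv_le_inv.2 (hbound s hs)

theorem stmt_0_general (T : ℝ) (hT : 0 < T) (g : ℝ → ℝ) (C : NNReal)
    (hLip : LipschitzOnWith C g (Icc 0 T))
    (hint : ∫⁻ s in Icc (0:ℝ) T, (ENNReal.ofReal (g s))⁻¹ < ⊤) :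
    ∀ t ∈ Icc (0:ℝ) T, 0 < g t := by
  intro t ht
  by_contra! hgt
  exact hint.ne (hLip.lintegral_inv_ofReal_eq_top hT ht hgt)

/-- A nonnegative Lipschitz function on `[0,T]` whose (extended-real) reciprocal has finite
Lebesgue integral is strictly positive on `[0,T]`. -/
theorem stmt_0 (T : ℝ) (hT : 0 < T) (g : ℝ → ℝ) (C : NNReal)
    (hLip : LipschitzOnWith C g (Icc 0 T))
    (hpos : ∀ t ∈ Icc (0:ℝ) T, 0 ≤ g t)
    (hint : ∫⁻ s in Icc (0:ℝ) T, (ENNReal.ofReal (g s))⁻¹ < ⊤) :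
    ∀ t ∈ Icc (0:ℝ) T, 0 < g t :=
  stmt_0_general T hT g C hLip hint
end

section
/- Let T > 0 and let e : [t⁰, t̂] → ℝᵐ (t⁰ < t̂ ≤ t⁰+T) and φ : [t⁰, t̂] → (0,∞) be Lipschitz continuous with φ(t)‖e(t)‖ < 1 on [t⁰, t̂) and φ(t̂)‖e(t̂)‖ = 1. Then ∫_{t⁰}^{t̂} 1/(1 − φ(t)²‖e(t)‖²) dt = ∞. -/
/-!
On the compact interval `[t⁰, t̂]` the function `g = 1 - (φ ‖e‖)²` is Lipschitz, being built from
bounded Lipschitz functions by products and differences, and `g t̂ = 0`. Hence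
`g t ≤ K (t̂ - t)`, so `1 / g` dominates a multiple of `1 / (t̂ - t)`, which is not integrable
near `t̂`.
-/

open MeasureTheory Set
open scoped NNReal

section LipschitzMul

variable {α R : Type*} [PseudoMetricSpace α] [NonUnitalSeminormedRing R] {s : Set α}
  {f g : α → R} {Kf Kg : ℝ≥0}

theorem LipschitzOnWith.mul_of_norm_le {Mf Mg : ℝ≥0} (hf : LipschitzOnWith Kf f s)
    (hg : LipschitzOnWith Kg g s) (hfM : ∀ x ∈ s, ‖f x‖ ≤ Mf) (hgM : ∀ x ∈ s, ‖g x‖ ≤ Mg) :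
    LipschitzOnWith (Mf * Kg + Kf * Mg) (fun x ↦ f x * g x) s := by
  refine LipschitzOnWith.of_dist_le_mul fun x hx y hy ↦ ?_
  have hfxy := hf.dist_le_mul x hx y hy
  have hgxy := hg.dist_le_mul x hx y hy
  rw [dist_eq_norm] at hfxy hgxy ⊢
  calc ‖f x * g x - f y * g y‖ = ‖f x * (g x - g y) + (f x - f y) * g y‖ := by
        rw [mul_sub, sub_mul, sub_add_sub_cancel]
    _ ≤ ‖f x‖ * ‖g x - g y‖ + ‖f x - f y‖ * ‖g y‖ :=
        (norm_add_le _ _).trans (add_le_add (norm_mul_le _ _) (norm_mul_le _ _))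
    _ ≤ Mf * (Kg * dist x y) + Kf * dist x y * Mg :=
        add_le_add (mul_le_mul (hfM x hx) hgxy (norm_nonneg _) Mf.coe_nonneg)
          (mul_le_mul hfxy (hgM y hy) (norm_nonneg _) (by positivity))
    _ = ↑(Mf * Kg + Kf * Mg) * dist x y := by push_cast; ring

theorem LipschitzOnWith.exists_mul_of_isCompact (hs : IsCompact s) (hf : LipschitzOnWith Kf f s)
    (hg : LipschitzOnWith Kg g s) : ∃ K, LipschitzOnWith K (fun x ↦ f x * g x) s := by
  obtain ⟨Mf, hfM⟩ := hs.exists_bound_of_continuousOn hf.continuousOn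
  obtain ⟨Mg, hgM⟩ := hs.exists_bound_of_continuousOn hg.continuousOn
  exact ⟨_, hf.mul_of_norm_le hg (Mf := Mf.toNNReal) (Mg := Mg.toNNReal)
    (fun x hx ↦ (hfM x hx).trans (Real.le_coe_toNNReal Mf))
    (fun x hx ↦ (hgM x hx).trans (Real.le_coe_toNNReal Mg))⟩

end LipschitzMul

theorem lintegral_inv_ofReal_mul_sub_eq_top {a b c : ℝ} (hab : a < b) (hc : 0 < c) :
    ∫⁻ t in Ioo a b, (ENNReal.ofReal (c * (b - t)))⁻¹ = ⊤ := by
  by_contra hfin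
  have hint : IntegrableOn (fun t ↦ (c * (b - t))⁻¹) (Ioo a b) := by
    refine (lintegral_ofReal_ne_top_iff_integrable (by fun_prop) ?_).1 ?_
    · filter_upwards [ae_restrict_mem measurableSet_Ioo] with t ht
      exact inv_nonneg.2 (mul_nonneg hc.le (sub_nonneg.2 ht.2.le))
    · rwa [setLIntegral_congr_fun measurableSet_Ioo fun t ht ↦
        ENNReal.ofReal_inv_of_pos (mul_pos hc (sub_pos.2 ht.2))]
  have hsub : IntervalIntegrable (fun t ↦ (t - b)⁻¹) volume a b := by
    refine (((intervalIntegrable_iff_integrableOn_Ioo_of_le hab.le).2 hint).const_mul (-c)).congr ?_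
    intro t _
    show -c * (c * (b - t))⁻¹ = (t - b)⁻¹
    rw [mul_inv, ← mul_assoc, neg_mul, mul_inv_cancel₀ hc.ne', neg_one_mul, ← inv_neg, neg_sub]
  simp [hab.ne, right_mem_uIcc] at hsub

theorem lintegral_inv_ofReal_eq_top_of_lipschitzOnWith {g : ℝ → ℝ} {K : ℝ≥0} {a b : ℝ}
    (hab : a < b) (hg : LipschitzOnWith K g (Icc a b)) (hgb : g b ≤ 0) :
    ∫⁻ t in Icc a b, (ENNReal.ofReal (g t))⁻¹ = ⊤ := by
  -- `K + 1` rather than `K`, so that the comparison function stays positive when `K = 0`.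
  have hle : ∀ t ∈ Ioo a b, g t ≤ (K + 1) * (b - t) := fun t ht ↦ by
    have := hg.le_add_mul (Ioo_subset_Icc_self ht) (right_mem_Icc.2 hab.le)
    rw [Real.dist_eq, abs_sub_comm, abs_of_pos (sub_pos.2 ht.2)] at this
    nlinarith [sub_pos.2 ht.2]
  refine top_le_iff.1 ?_
  calc ⊤ = ∫⁻ t in Ioo a b, (ENNReal.ofReal ((K + 1) * (b - t)))⁻¹ :=
        (lintegral_inv_ofReal_mul_sub_eq_top hab (by positivity)).symm
    _ ≤ ∫⁻ t in Ioo a b, (ENNReal.ofReal (g t))⁻¹ :=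
        setLIntegral_mono' measurableSet_Ioo fun t ht ↦
          ENNReal.inv_le_inv.2 (ENNReal.ofReal_le_ofReal (hle t ht))
    _ ≤ ∫⁻ t in Icc a b, (ENNReal.ofReal (g t))⁻¹ := lintegral_mono_set Ioo_subset_Icc_self

theorem stmt_14_general (m : ℕ) (t0 that : ℝ) (h1 : t0 < that)
    (e : ℝ → EuclideanSpace ℝ (Fin m)) (φ : ℝ → ℝ) (Ce Cφ : NNReal)
    (heLip : LipschitzOnWith Ce e (Icc t0 that))
    (hφLip : LipschitzOnWith Cφ φ (Icc t0 that))
    (htouch : φ that * ‖e that‖ = 1) :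
    ∫⁻ t in Icc t0 that, (ENNReal.ofReal (1 - φ t ^ 2 * ‖e t‖ ^ 2))⁻¹ = ⊤ := by
  have hnorm : LipschitzOnWith (1 * Ce) (fun t ↦ ‖e t‖) (Icc t0 that) :=
    lipschitzWith_one_norm.comp_lipschitzOnWith heLip
  obtain ⟨K, hK⟩ := hφLip.exists_mul_of_isCompact isCompact_Icc hnorm
  obtain ⟨K', hK'⟩ := hK.exists_mul_of_isCompact isCompact_Icc hK
  have hg : LipschitzOnWith (0 + K') (fun t ↦ 1 - φ t ^ 2 * ‖e t‖ ^ 2) (Icc t0 that) := by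
    have hsq : (fun t ↦ 1 - φ t ^ 2 * ‖e t‖ ^ 2) = fun t ↦ 1 - φ t * ‖e t‖ * (φ t * ‖e t‖) := by
      ext t; ring
    rw [hsq]
    exact (LipschitzWith.const (1 : ℝ)).lipschitzOnWith.sub hK'
  refine lintegral_inv_ofReal_eq_top_of_lipschitzOnWith h1 hg ?_
  rw [← mul_pow, htouch, one_pow, sub_self]

/-- If the error is Lipschitz, stays strictly inside the funnel on `[t⁰,t̂)` and touches the
funnel boundary at `t̂`, then the integral of `1/(1 − φ²‖e‖²)` over `[t⁰,t̂]` is infinite. -/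
theorem stmt_14 (m : ℕ) (T t0 that : ℝ) (hT : 0 < T) (h1 : t0 < that) (h2 : that ≤ t0 + T)
    (e : ℝ → EuclideanSpace ℝ (Fin m)) (φ : ℝ → ℝ) (Ce Cφ : NNReal)
    (heLip : LipschitzOnWith Ce e (Icc t0 that))
    (hφLip : LipschitzOnWith Cφ φ (Icc t0 that))
    (hφpos : ∀ t ∈ Icc t0 that, 0 < φ t)
    (hin : ∀ t ∈ Ico t0 that, φ t * ‖e t‖ < 1)
    (htouch : φ that * ‖e that‖ = 1) :
    ∫⁻ t in Icc t0 that, (ENNReal.ofReal (1 - φ t ^ 2 * ‖e t‖ ^ 2))⁻¹ = ⊤ :=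
  stmt_14_general m t0 that h1 e φ Ce Cφ heLip hφLip htouch
end
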